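/- The linear map T_j : V(ε_1) ⊗ (A⊗V)_{⟨j⟩} → (A⊗V)_{⟨j+1⟩} defined by T_j(e_i' ⊗ w) = p_i.w is a gl(n)-module homomorphism (intertwining operator), where {e_1',...,e_n'} is the standard basis of the natural gl(n)-module V(ε_1) and gl(n) acts on A⊗V via x_i∂_{x_j} ↦ (polynomial action) ⊗ Id + Id ⊗ E_{i,j}. -/

import Mathlib

open MvPolynomial TensorProduct

noncomputable section

variable (F : Type) [Field F] (n : ℕ)

/-- Standard matrix units E_{i,j} of gl(n,F). -/
def EE (i j : Fin n) : Matrix (Fin n) (Fin n) F := Matrix.single i j 1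

/-- x_i ∂_{x_j} as a linear endomorphism of F[x_1,…,x_n]. -/
def xdL (i j : Fin n) : MvPolynomial (Fin n) F →ₗ[F] MvPolynomial (Fin n) F :=
  (((X i : MvPolynomial (Fin n) F) • pderiv j :
    Derivation F (MvPolynomial (Fin n) F) (MvPolynomial (Fin n) F))).toLinearMap

/-- ∂_{x_j}. -/
def ddL (j : Fin n) : MvPolynomial (Fin n) F →ₗ[F] MvPolynomial (Fin n) F :=
  ((pderiv j : Derivation F (MvPolynomial (Fin n) F) (MvPolynomial (Fin n) F))).toLinearMap

/-- p_i = x_i Σ_r x_r ∂_{x_r}. -/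
def ptL (i : Fin n) : MvPolynomial (Fin n) F →ₗ[F] MvPolynomial (Fin n) F :=
  (((X i : MvPolynomial (Fin n) F) •
      ∑ r : Fin n, ((X r : MvPolynomial (Fin n) F) • pderiv r :
        Derivation F (MvPolynomial (Fin n) F) (MvPolynomial (Fin n) F)) :
    Derivation F (MvPolynomial (Fin n) F) (MvPolynomial (Fin n) F))).toLinearMap

variable (V : Type) [AddCommGroup V] [Module F V]
variable (ρ : Matrix (Fin n) (Fin n) F →ₗ[F] Module.End F V)

/-- Action (3.10) of x_i∂_{x_j} on A ⊗ V. -/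
def opX (i j : Fin n) : Module.End F (MvPolynomial (Fin n) F ⊗[F] V) :=
  TensorProduct.map (xdL F n i j) LinearMap.id +
    TensorProduct.map LinearMap.id (ρ (EE F n i j))

/-- Action (3.11) of ∂_{x_i} on A ⊗ V. -/
def opD (i : Fin n) : Module.End F (MvPolynomial (Fin n) F ⊗[F] V) :=
  TensorProduct.map (ddL F n i) LinearMap.id

/-- Action (3.12) of p_i on A ⊗ V. -/
def opP (i : Fin n) : Module.End F (MvPolynomial (Fin n) F ⊗[F] V) :=
  TensorProduct.map (ptL F n i) LinearMap.id +
    TensorProduct.map (LinearMap.mulLeft F (X i)) (ρ (1 : Matrix (Fin n) (Fin n) F)) +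
    ∑ j : Fin n, TensorProduct.map (LinearMap.mulLeft F (X j)) (ρ (EE F n i j))

/-- The subspace U(P)(1 ⊗ V). -/
def UP : Submodule F (MvPolynomial (Fin n) F ⊗[F] V) :=
  Submodule.span F
    {w | ∃ (l : List (Fin n)) (v : V),
      w = l.foldr (fun t u => opP F n V ρ t u) ((1 : MvPolynomial (Fin n) F) ⊗ₜ[F] v)}

/-- The degree-k homogeneous component (A ⊗ V)_{⟨k⟩}. -/
def Deg (k : ℕ) : Submodule F (MvPolynomial (Fin n) F ⊗[F] V) :=
  Submodule.span F
    {w | ∃ (c : Fin n →₀ ℕ) (v : V), (∑ i, c i) = k ∧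
      w = (monomial c (1 : F)) ⊗ₜ[F] v}

/-- W is an L_{n+1}-submodule of A ⊗ V. -/
def IsLSubmodule (W : Submodule F (MvPolynomial (Fin n) F ⊗[F] V)) : Prop :=
  ∀ w ∈ W, (∀ i j : Fin n, opX F n V ρ i j w ∈ W) ∧
    (∀ i : Fin n, opD F n V i w ∈ W) ∧ (∀ i : Fin n, opP F n V ρ i w ∈ W)

/-- ρ is a representation of gl(n,F). -/
def IsGlRep : Prop :=
  ∀ X Y : Matrix (Fin n) (Fin n) F, ρ (X * Y - Y * X) = ρ X * ρ Y - ρ Y * ρ X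

/-- Irreducibility of the gl(n)-module V. -/
def IsIrreducibleRep : Prop :=
  (∃ v : V, v ≠ 0) ∧
  ∀ U : Submodule F V, (∀ X : Matrix (Fin n) (Fin n) F, ∀ u ∈ U, ρ X u ∈ U) →
    U = ⊥ ∨ U = ⊤

/-- v is a highest weight vector of weight μ in V. -/
def IsHWVector (μ : Fin n → F) (v : V) : Prop :=
  v ≠ 0 ∧ (∀ i : Fin n, ρ (EE F n i i) v = μ i • v) ∧
    ∀ i j : Fin n, i < j → ρ (EE F n i j) v = 0

/-- The index set I(μ,j) of (2.11). -/
def Iset (μ : Fin n → F) (j : ℕ) : Set (Fin n → ℕ) :=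
  {c | (∑ i, c i) = j ∧
    ∀ s t : Fin n, (s : ℕ) + 1 = (t : ℕ) →
      ∃ m : ℕ, μ s - μ t = (m : F) ∧ c t ≤ m}

/-- The scalar q_c of Lemma 3.2.3. -/
def qc (μ : Fin n → F) (c : Fin n → ℕ) : F :=
  ∏ s : Fin n, ∏ i ∈ Finset.range (c s),
    (μ s + (∑ j, μ j) - ((s : ℕ) + 1) + (i + 1))

/-!
Everything reduces to the commutation relation `[x_s∂_t, p_k] = δ_{tk} p_s` of the actions on
`A ⊗ V`: given it,
`T(E_{s,t} e_k' ⊗ w + e_k' ⊗ x_s∂_t.w) = δ_{tk} p_s.w + p_k.(x_s∂_t.w) = x_s∂_t.(p_k.w)`.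
On `A ⊗ V` it follows from the same relation for the derivations `x_s∂_t` and
`p_k = x_k Σ_r x_r∂_r` of `A` (checked on the generators), from `[x_s∂_t, x_j] = δ_{tj} x_s` and
from `[E_{s,t}, E_{k,j}] = δ_{tk} E_{s,j} - δ_{js} E_{k,t}`; the two terms `x_s ⊗ E_{k,t}` produced
by the last two cancel.
-/

namespace MvPolynomial

variable {σ R : Type*} [CommRing R] [DecidableEq σ]

def xPderiv (s t : σ) : Derivation R (MvPolynomial σ R) (MvPolynomial σ R) :=
  (X s : MvPolynomial σ R) • pderiv t

lemma xPderiv_X (s t i : σ) :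
    xPderiv s t (X i : MvPolynomial σ R) = if t = i then X s else 0 := by
  rw [xPderiv, Derivation.smul_apply, pderiv_X, Pi.single_apply, smul_eq_mul]
  split_ifs <;> simp_all [eq_comm]

variable [Fintype σ]

def euler : Derivation R (MvPolynomial σ R) (MvPolynomial σ R) :=
  ∑ r, xPderiv r r

lemma euler_X (i : σ) : euler (X i : MvPolynomial σ R) = X i := by
  rw [euler, ← Derivation.coeFnAddMonoidHom_apply, map_sum, Finset.sum_apply]
  simp [Derivation.coeFnAddMonoidHom_apply, xPderiv_X]

def xEuler (k : σ) : Derivation R (MvPolynomial σ R) (MvPolynomial σ R) :=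
  (X k : MvPolynomial σ R) • euler

lemma lie_xPderiv_xEuler (s t k : σ) :
    ⁅xPderiv (R := R) s t, xEuler (R := R) k⁆ = if t = k then xEuler (R := R) s else 0 := by
  apply derivation_ext
  intro i
  rw [Derivation.commutator_apply]
  simp only [xEuler, Derivation.smul_apply, Derivation.leibniz, xPderiv_X, euler_X, smul_eq_mul]
  split_ifs <;> simp_all [euler_X] <;> ring

end MvPolynomial

section

variable {F n V ρ}

lemma xdL_ptL_apply (s t k : Fin n) (f : MvPolynomial (Fin n) F) :
    xdL F n s t (ptL F n k f) = ptL F n k (xdL F n s t f) + if t = k then ptL F n s f else 0 := by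
  have h := congrArg (fun D : Derivation F _ _ => D f) (lie_xPderiv_xEuler (R := F) s t k)
  simp only [Derivation.commutator_apply] at h
  split_ifs at h ⊢ <;> exact eq_add_of_sub_eq' h

lemma xdL_X_mul (s t j : Fin n) (f : MvPolynomial (Fin n) F) :
    xdL F n s t (X j * f) = X j * xdL F n s t f + if t = j then X s * f else 0 := by
  change xPderiv s t (X j * f) = X j * xPderiv s t f + _
  rw [Derivation.leibniz, xPderiv_X, smul_eq_mul, smul_eq_mul]
  split_ifs <;> ring

lemma EE_mul_EE (s t k j : Fin n) :
    EE F n s t * EE F n k j = if t = k then EE F n s j else 0 := by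
  split_ifs with h
  · rw [h, EE, EE, EE, Matrix.single_mul_single_same, one_mul]
  · simp [EE, h]

lemma IsGlRep.apply_apply_swap (hρ : IsGlRep F n V ρ) (A B : Matrix (Fin n) (Fin n) F) (v : V) :
    ρ A (ρ B v) = ρ B (ρ A v) + ρ (A * B - B * A) v := by
  rw [hρ A B]
  simp

lemma IsGlRep.apply_one_comm (hρ : IsGlRep F n V ρ) (A : Matrix (Fin n) (Fin n) F) (v : V) :
    ρ A (ρ 1 v) = ρ 1 (ρ A v) := by
  simp [hρ.apply_apply_swap A 1]

lemma IsGlRep.EE_apply_EE_swap (hρ : IsGlRep F n V ρ) (s t k j : Fin n) (v : V) :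
    ρ (EE F n s t) (ρ (EE F n k j) v) = ρ (EE F n k j) (ρ (EE F n s t) v) +
      ((if t = k then ρ (EE F n s j) v else 0) - if j = s then ρ (EE F n k t) v else 0) := by
  rw [hρ.apply_apply_swap, EE_mul_EE, EE_mul_EE]
  split_ifs <;> simp

lemma opX_opP_tmul (hρ : IsGlRep F n V ρ) (s t k : Fin n) (f : MvPolynomial (Fin n) F) (v : V) :
    opX F n V ρ s t (opP F n V ρ k (f ⊗ₜ v)) =
      opP F n V ρ k (opX F n V ρ s t (f ⊗ₜ v)) +
        if t = k then opP F n V ρ s (f ⊗ₜ v) else 0 := by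
  simp only [opX, opP, LinearMap.add_apply, LinearMap.coe_sum, Finset.sum_apply, map_tmul,
    LinearMap.id_coe, id_eq, LinearMap.mulLeft_apply, map_add, map_sum, xdL_ptL_apply, xdL_X_mul,
    hρ.apply_one_comm (EE F n s t), hρ.EE_apply_EE_swap s t]
  split_ifs with h
  · subst h
    simp only [if_true, add_tmul, tmul_add, tmul_sub, ite_tmul, tmul_ite, Finset.sum_add_distrib,
      Finset.sum_sub_distrib, Finset.sum_ite_eq, Finset.sum_ite_eq', Finset.mem_univ]
    abel
  · simp only [add_zero, zero_sub, add_tmul, tmul_add, tmul_neg, ite_tmul, tmul_ite,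
      Finset.sum_add_distrib, Finset.sum_neg_distrib, Finset.sum_ite_eq, Finset.sum_ite_eq',
      Finset.mem_univ]
    abel

lemma opX_opP_apply (hρ : IsGlRep F n V ρ) (s t k : Fin n) (w : MvPolynomial (Fin n) F ⊗[F] V) :
    opX F n V ρ s t (opP F n V ρ k w) =
      opP F n V ρ k (opX F n V ρ s t w) + if t = k then opP F n V ρ s w else 0 := by
  induction w using TensorProduct.induction_on with
  | zero => simp
  | tmul f v => exact opX_opP_tmul hρ s t k f v
  | add w w' hw hw' =>
    simp only [map_add, hw, hw']
    split_ifs <;> abel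

end

theorem T_is_intertwiner
    (hρ : IsGlRep F n V ρ)
    (T : ((Fin n → F) ⊗[F] (MvPolynomial (Fin n) F ⊗[F] V)) →ₗ[F]
      (MvPolynomial (Fin n) F ⊗[F] V))
    (hT : ∀ (i : Fin n) (w : MvPolynomial (Fin n) F ⊗[F] V),
      T ((Pi.single i (1 : F)) ⊗ₜ[F] w) = opP F n V ρ i w) :
    ∀ (s t : Fin n) (u : (Fin n → F) ⊗[F] (MvPolynomial (Fin n) F ⊗[F] V)),
      T (TensorProduct.map ((Matrix.single s t (1 : F)).mulVecLin) LinearMap.id u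
          + TensorProduct.map LinearMap.id (opX F n V ρ s t) u)
        = opX F n V ρ s t (T u) := by
  intro s t u
  suffices h : T ∘ₗ (TensorProduct.map (Matrix.single s t (1 : F)).mulVecLin LinearMap.id +
      TensorProduct.map LinearMap.id (opX F n V ρ s t)) = opX F n V ρ s t ∘ₗ T from
    LinearMap.congr_fun h u
  refine TensorProduct.ext <| LinearMap.pi_ext' fun k =>
    LinearMap.ext_ring <| LinearMap.ext fun w => ?_
  simp only [LinearMap.compr₂ₛₗ_apply, mk_apply, LinearMap.coe_single, LinearMap.comp_apply,
    LinearMap.add_apply, map_tmul, Matrix.mulVecLin_apply, Matrix.single_mulVec_eq,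
    LinearMap.id_coe, id_eq, ← smul_tmul', map_add, map_smul, hT, opX_opP_apply hρ,
    Pi.single_apply, one_mul]
  split_ifs <;> simp [add_comm]
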